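/- arXiv:2204.07821 — 3 statements merged into one kernel-verified Lean document; each statement's English description precedes it below -/
import Mathlib

section
/- Let P, P̃, μ be measures on a common measurable space and π a coupling between P and P̃ (a measure on the product with marginals P and P̃). If μ is subordinate to P, then there exist measures μ̃ and π̃ such that π̃ is subordinate to π, μ̃ is subordinate to P̃, μ̃ has the same total mass as μ, and π̃ is a coupling between μ and μ̃. -/
/-!
Since `μ ≤ P` and `P` is σ-finite, `μ` has a Radon–Nikodym density `f ≤ 1` with respect to
`P = π.fst`. Reweighting `π` by `f` of the first coordinate gives a measure `π̃ ≤ π` whose first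
marginal is `P.withDensity f = μ`; its second marginal `μ̃` is then below `π.snd = P̃` and has
the same total mass as `μ`.
-/

open MeasureTheory Set
open scoped ENNReal

namespace MeasureTheory.Measure

variable {α β : Type*} [MeasurableSpace α] [MeasurableSpace β]

lemma withDensity_le_self {μ : Measure α} {f : α → ℝ≥0∞} (hf : f ≤ᵐ[μ] 1) :
    μ.withDensity f ≤ μ := by
  simpa only [withDensity_one] using withDensity_mono hf

lemma fst_withDensity_comp_fst (π : Measure (α × β)) {f : α → ℝ≥0∞} (hf : Measurable f) :
    (π.withDensity (f ∘ Prod.fst)).fst = π.fst.withDensity f := by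
  ext s hs
  rw [fst_apply hs, withDensity_apply _ (measurable_fst hs), withDensity_apply _ hs, Measure.fst,
    setLIntegral_map hs hf measurable_fst]
  rfl

theorem exists_le_fst_eq_of_le_fst (π : Measure (α × β)) [SigmaFinite π.fst] {μ : Measure α}
    (hμ : μ ≤ π.fst) : ∃ π' ≤ π, π'.fst = μ := by
  have : SigmaFinite μ := sigmaFinite_of_le _ hμ
  refine ⟨π.withDensity (μ.rnDeriv π.fst ∘ Prod.fst), withDensity_le_self ?_, ?_⟩
  · have hf : μ.rnDeriv π.fst ≤ᵐ[π.fst] 1 := rnDeriv_le_one_of_le hμ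
    exact ae_of_ae_map measurable_fst.aemeasurable hf
  · rw [fst_withDensity_comp_fst π (measurable_rnDeriv _ _),
      withDensity_rnDeriv_eq _ _ hμ.absolutelyContinuous]

end MeasureTheory.Measure

theorem exists_transport_of_subordinate_general {X : Type*} [MeasurableSpace X]
    (P Ptilde μ : Measure X) [SigmaFinite P]
    (π : Measure (X × X)) (hfst : π.fst = P) (hsnd : π.snd = Ptilde)
    (hsub : ∀ E : Set X, MeasurableSet E → μ E ≤ P E) :
    ∃ (μtilde : Measure X) (πtilde : Measure (X × X)),
      (∀ E : Set (X × X), MeasurableSet E → πtilde E ≤ π E) ∧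
      (∀ E : Set X, MeasurableSet E → μtilde E ≤ Ptilde E) ∧
      μtilde Set.univ = μ Set.univ ∧
      πtilde.fst = μ ∧ πtilde.snd = μtilde := by
  subst hfst hsnd
  obtain ⟨πtilde, hle, hfst⟩ := π.exists_le_fst_eq_of_le_fst (Measure.le_iff.mpr hsub)
  refine ⟨πtilde.snd, πtilde, Measure.le_iff.mp hle, Measure.le_iff.mp (Measure.snd_mono hle),
    ?_, hfst, rfl⟩
  rw [Measure.snd_univ, ← Measure.fst_univ, hfst]

/-- If `π` is a coupling between `P` and `P̃`, and `μ` is subordinate to `P`, then there are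
measures `μ̃` subordinate to `P̃` and `π̃` subordinate to `π` such that `μ̃` has the same total
mass as `μ` and `π̃` is a coupling between `μ` and `μ̃`. -/
theorem exists_transport_of_subordinate {X : Type*} [MeasurableSpace X]
    (P Ptilde μ : Measure X) [SigmaFinite P] [SigmaFinite Ptilde] [SigmaFinite μ]
    (π : Measure (X × X)) (hfst : π.fst = P) (hsnd : π.snd = Ptilde)
    (hsub : ∀ E : Set X, MeasurableSet E → μ E ≤ P E) :
    ∃ (μtilde : Measure X) (πtilde : Measure (X × X)),
      (∀ E : Set (X × X), MeasurableSet E → πtilde E ≤ π E) ∧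
      (∀ E : Set X, MeasurableSet E → μtilde E ≤ Ptilde E) ∧
      μtilde Set.univ = μ Set.univ ∧
      πtilde.fst = μ ∧ πtilde.snd = μtilde :=
  exists_transport_of_subordinate_general P Ptilde μ π hfst hsnd hsub
end

section
/- Let φ be a bounded probability density on ℝ^D satisfying the moderate-tail condition ∫_{|x|>R} φ(x) dx ≤ C R^{−α} for all R > 0, with α ≥ D² − D. Then for every 0 < η ≤ 1, the measure of the sublevel set satisfies ∫_{φ ≤ η} φ(x) dx ≤ ω_D η^{1−1/D} + C η^{α/D²}, where ω_D is the volume of the unit ball; in particular it is O(η^{1−1/D}). -/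
open MeasureTheory Set

/-- Sublevel-set mass estimate for a bounded density with a moderate tail: if
`∫_{|x|>R} φ ≤ C R^{−α}` for all `R > 0` and `α ≥ D² − D`, then for `0 < η ≤ 1`,
`∫_{φ ≤ η} φ ≤ ω_D η^{1−1/D} + C η^{α/D²}`, where `ω_D` is the volume of the unit ball. -/
theorem sublevel_mass_estimate {D : ℕ} (hD : 0 < D)
    (φ : EuclideanSpace ℝ (Fin D) → ℝ) (hφm : Measurable φ) (hφ0 : ∀ x, 0 ≤ φ x)
    (hbdd : BddAbove (Set.range φ)) (hφ1 : ∫ x, φ x = 1)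
    (C α : ℝ) (hC : 0 < C) (hα : 0 < α) (hαD : (D : ℝ) ^ 2 - D ≤ α)
    (htail : ∀ R : ℝ, 0 < R → ∫ x in {x | R < ‖x‖}, φ x ≤ C * R ^ (-α))
    (η : ℝ) (hη0 : 0 < η) (hη1 : η ≤ 1) :
    ∫ x in {x | φ x ≤ η}, φ x ≤
      (volume (Metric.ball (0 : EuclideanSpace ℝ (Fin D)) 1)).toReal * η ^ (1 - (1 : ℝ) / D)
        + C * η ^ (α / (D : ℝ) ^ 2) := by
  have hDR : (0 : ℝ) < D := by exact_mod_cast hD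
  have hInt : Integrable φ := by
    by_contra h
    rw [integral_undef h] at hφ1
    norm_num at hφ1
  set R : ℝ := η ^ (-(1 / (D : ℝ) ^ 2)) with hRdef
  have hR : 0 < R := Real.rpow_pos_of_pos hη0 _
  -- the two pieces
  set A : Set (EuclideanSpace ℝ (Fin D)) := {x | φ x ≤ η}
  set s₁ : Set (EuclideanSpace ℝ (Fin D)) := A ∩ Metric.closedBall 0 R
  set s₂ : Set (EuclideanSpace ℝ (Fin D)) := {x | R < ‖x‖}
  have hAmeas : MeasurableSet A := hφm measurableSet_Iic
  have hs₁meas : MeasurableSet s₁ := hAmeas.inter measurableSet_closedBall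
  have hs₂meas : MeasurableSet s₂ :=
    measurableSet_lt measurable_const measurable_norm
  haveI : Nonempty (Fin D) := Fin.pos_iff_nonempty.mp hD
  have hDne : (D : ℝ) ≠ 0 := hDR.ne'
  have hdisj : Disjoint s₁ s₂ := by
    rw [Set.disjoint_left]
    rintro x ⟨-, hx⟩ hx2
    simp only [Metric.mem_closedBall, dist_zero_right] at hx
    exact absurd hx (not_le.2 hx2)
  have hsub : A ⊆ s₁ ∪ s₂ := by
    intro x hx
    rcases le_or_gt ‖x‖ R with h | h
    · exact Or.inl ⟨hx, by simpa [Metric.mem_closedBall, dist_zero_right] using h⟩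
    · exact Or.inr h
  have hnn : 0 ≤ᵐ[volume.restrict (s₁ ∪ s₂)] φ :=
    Filter.Eventually.of_forall hφ0
  have h1 : ∫ x in A, φ x ≤ ∫ x in s₁ ∪ s₂, φ x :=
    setIntegral_mono_set hInt.integrableOn hnn
      (HasSubset.Subset.eventuallyLE hsub)
  have h2 : ∫ x in s₁ ∪ s₂, φ x = (∫ x in s₁, φ x) + ∫ x in s₂, φ x :=
    setIntegral_union hdisj hs₂meas hInt.integrableOn hInt.integrableOn
  -- bound on s₁
  have hvol1 : volume s₁ ≤ volume (Metric.closedBall (0 : EuclideanSpace ℝ (Fin D)) R) :=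
    measure_mono Set.inter_subset_right
  have hvolball : volume (Metric.closedBall (0 : EuclideanSpace ℝ (Fin D)) R)
      = ENNReal.ofReal (R ^ D) * volume (Metric.ball (0 : EuclideanSpace ℝ (Fin D)) 1) := by
    rw [Measure.addHaar_closedBall_eq_addHaar_ball, Measure.addHaar_ball_of_pos _ _ hR,
      finrank_euclideanSpace_fin]
  have hfin : volume s₁ < ⊤ := lt_of_le_of_lt (hvol1.trans_eq hvolball)
    (ENNReal.mul_lt_top ENNReal.ofReal_lt_top measure_ball_lt_top)
  have hb1 : ∫ x in s₁, φ x ≤ η * (volume s₁).toReal := by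
    have : ∫ x in s₁, φ x ≤ ∫ _x in s₁, η := by
      apply setIntegral_mono_on hInt.integrableOn (integrableOn_const hfin.ne) hs₁meas
      intro x hx; exact hx.1
    simpa [mul_comm, measureReal_def] using this
  have hvolr : (volume s₁).toReal ≤
      R ^ D * (volume (Metric.ball (0 : EuclideanSpace ℝ (Fin D)) 1)).toReal := by
    have := ENNReal.toReal_mono
      (ENNReal.mul_lt_top ENNReal.ofReal_lt_top measure_ball_lt_top).ne
      (hvol1.trans hvolball.le)
    rwa [ENNReal.toReal_mul, ENNReal.toReal_ofReal (by positivity)] at this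
  have hpow : η * R ^ D = η ^ (1 - (1 : ℝ) / D) := by
    rw [hRdef, ← Real.rpow_natCast (η ^ (-(1 / (D : ℝ) ^ 2))) D, ← Real.rpow_mul hη0.le]
    nth_rewrite 1 [← Real.rpow_one η]
    rw [← Real.rpow_add hη0]
    congr 1
    field_simp
    ring
  have hb1' : ∫ x in s₁, φ x ≤
      (volume (Metric.ball (0 : EuclideanSpace ℝ (Fin D)) 1)).toReal * η ^ (1 - (1 : ℝ) / D) := by
    calc ∫ x in s₁, φ x ≤ η * (volume s₁).toReal := hb1
    _ ≤ η * (R ^ D * (volume (Metric.ball (0 : EuclideanSpace ℝ (Fin D)) 1)).toReal) :=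
        mul_le_mul_of_nonneg_left hvolr hη0.le
    _ = (volume (Metric.ball (0 : EuclideanSpace ℝ (Fin D)) 1)).toReal * (η * R ^ D) := by ring
    _ = _ := by rw [hpow]
  -- bound on s₂
  have hb2 : ∫ x in s₂, φ x ≤ C * η ^ (α / (D : ℝ) ^ 2) := by
    have := htail R hR
    have hRpow : R ^ (-α) = η ^ (α / (D : ℝ) ^ 2) := by
      rw [hRdef, ← Real.rpow_mul hη0.le]
      congr 1
      field_simp
    rwa [hRpow] at this
  calc ∫ x in A, φ x ≤ (∫ x in s₁, φ x) + ∫ x in s₂, φ x := h1.trans_eq h2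
  _ ≤ _ := add_le_add hb1' hb2
end

section
/- Let f: ℝ^D → [0,∞) be a density with bounded support and ‖f‖_∞ < ∞, inducing a probability measure P. For x ∈ ℝ^D define F_x(r) = P(f(X)^{1/D} · d(X, x) ≤ r) and let F_x^{−1}(m) = inf{t : F_x(t) ≥ m}. Then for fixed m ∈ (0,1), the map x ↦ F_x^{−1}(m) is Lipschitz on ℝ^D with Lipschitz constant at most ‖f‖_∞^{1/D}. -/
/-!
With `g = f ^ (1/D) ≤ ‖f‖_∞ ^ (1/D) =: L`, the triangle inequality gives
`g ξ * d(ξ, x) ≤ g ξ * d(ξ, y) + L * d(x, y)`, so `F_y(t) ≤ F_x(t + L d(x, y))` and hence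
`F_x⁻¹(m) ≤ F_y⁻¹(m) + L d(x, y)`. Bounded support makes the quantile sets nonempty and the
nonnegativity of `g` bounds them below by `0`, so the infima are genuine.
-/

open MeasureTheory Set

/-- `F_x(r) = P(f(X)^{1/D} d(X,x) ≤ r)` for `P` the measure with density `f`. -/
noncomputable def Fcdf {D : ℕ} (f : EuclideanSpace ℝ (Fin D) → ℝ)
    (x : EuclideanSpace ℝ (Fin D)) (r : ℝ) : ℝ :=
  ((volume.withDensity fun ξ => ENNReal.ofReal (f ξ))
    {ξ | f ξ ^ ((1 : ℝ) / D) * dist ξ x ≤ r}).toReal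

/-- Generalized inverse `F_x^{-1}(m) = inf {t : F_x(t) ≥ m}`. -/
noncomputable def Fquantile {D : ℕ} (f : EuclideanSpace ℝ (Fin D) → ℝ)
    (x : EuclideanSpace ℝ (Fin D)) (m : ℝ) : ℝ :=
  sInf {t : ℝ | m ≤ Fcdf f x t}

theorem csInf_setOf_le_le_add {F G : ℝ → ℝ} {m c : ℝ} (hF : BddBelow {t | m ≤ F t})
    (hG : {t | m ≤ G t}.Nonempty) (hGF : ∀ t, G t ≤ F (t + c)) :
    sInf {t | m ≤ F t} ≤ sInf {t | m ≤ G t} + c := by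
  rw [← sub_le_iff_le_add]
  refine le_csInf hG fun t ht => ?_
  rw [sub_le_iff_le_add]
  exact csInf_le hF (ht.trans (hGF t))

section WeightedDistance

variable {X : Type*} [PseudoMetricSpace X] {g : X → ℝ} {L : ℝ}

theorem setOf_mul_dist_le_subset (hg0 : ∀ ξ, 0 ≤ g ξ) (hgL : ∀ ξ, g ξ ≤ L) (x y : X) (t : ℝ) :
    {ξ | g ξ * dist ξ y ≤ t} ⊆ {ξ | g ξ * dist ξ x ≤ t + L * dist x y} := by
  intro ξ (hξ : g ξ * dist ξ y ≤ t)
  show g ξ * dist ξ x ≤ t + L * dist x y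
  calc g ξ * dist ξ x ≤ g ξ * dist ξ y + g ξ * dist y x := by
        rw [← mul_add]; exact mul_le_mul_of_nonneg_left (dist_triangle ξ y x) (hg0 ξ)
    _ ≤ t + L * dist x y := by
        rw [dist_comm y x]; gcongr; exact hgL ξ

theorem setOf_mul_dist_le_eq_empty (hg0 : ∀ ξ, 0 ≤ g ξ) (x : X) {t : ℝ} (ht : t < 0) :
    {ξ | g ξ * dist ξ x ≤ t} = ∅ :=
  eq_empty_of_forall_notMem fun ξ (hξ : g ξ * dist ξ x ≤ t) =>
    (mul_nonneg (hg0 ξ) dist_nonneg).not_gt (hξ.trans_lt ht)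

theorem setOf_mul_dist_le_eq_univ (hg0 : ∀ ξ, 0 ≤ g ξ) (hgL : ∀ ξ, g ξ ≤ L) {x : X} {r : ℝ}
    (hr : 0 ≤ r) (hsupp : Function.support g ⊆ Metric.closedBall x r) :
    {ξ | g ξ * dist ξ x ≤ L * r} = univ := by
  refine eq_univ_of_forall fun ξ => ?_
  show g ξ * dist ξ x ≤ L * r
  by_cases hξ : g ξ = 0
  · rw [hξ, zero_mul]
    exact mul_nonneg ((hg0 ξ).trans (hgL ξ)) hr
  · exact mul_le_mul (hgL ξ) (hsupp hξ) dist_nonneg ((hg0 ξ).trans (hgL ξ))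

end WeightedDistance

section Quantile

variable {D : ℕ} {f : EuclideanSpace ℝ (Fin D) → ℝ}

theorem rpow_one_div_le_sSup_range (hf0 : ∀ ξ, 0 ≤ f ξ) (hbdd : BddAbove (range f))
    (ξ : EuclideanSpace ℝ (Fin D)) :
    f ξ ^ ((1 : ℝ) / D) ≤ sSup (range f) ^ ((1 : ℝ) / D) :=
  Real.rpow_le_rpow (hf0 ξ) (le_csSup hbdd ⟨ξ, rfl⟩) (by positivity)

theorem Fcdf_le_Fcdf_add [IsFiniteMeasure (volume.withDensity fun ξ => ENNReal.ofReal (f ξ))]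
    (hf0 : ∀ ξ, 0 ≤ f ξ) (hbdd : BddAbove (range f)) (x y : EuclideanSpace ℝ (Fin D)) (t : ℝ) :
    Fcdf f y t ≤ Fcdf f x (t + sSup (range f) ^ ((1 : ℝ) / D) * dist x y) :=
  ENNReal.toReal_mono (measure_ne_top _ _) <| measure_mono <|
    setOf_mul_dist_le_subset (fun ξ => Real.rpow_nonneg (hf0 ξ) _)
      (rpow_one_div_le_sSup_range hf0 hbdd) x y t

theorem Fcdf_of_neg (hf0 : ∀ ξ, 0 ≤ f ξ) (x : EuclideanSpace ℝ (Fin D)) {t : ℝ} (ht : t < 0) :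
    Fcdf f x t = 0 := by
  rw [Fcdf, setOf_mul_dist_le_eq_empty (fun ξ => Real.rpow_nonneg (hf0 ξ) _) x ht,
    measure_empty, ENNReal.toReal_zero]

theorem exists_Fcdf_eq_one
    [IsProbabilityMeasure (volume.withDensity fun ξ => ENNReal.ofReal (f ξ))]
    (hD : 0 < D) (hf0 : ∀ ξ, 0 ≤ f ξ) (hsupp : Bornology.IsBounded (Function.support f))
    (hbdd : BddAbove (range f)) (x : EuclideanSpace ℝ (Fin D)) :
    ∃ r, Fcdf f x r = 1 := by
  obtain ⟨r, hr, hsub⟩ := hsupp.subset_closedBall_lt 0 x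
  have hsupp_rpow : Function.support (fun ξ => f ξ ^ ((1 : ℝ) / D)) = Function.support f := by
    ext ξ
    simp only [Function.mem_support, ne_eq, Real.rpow_eq_zero_iff_of_nonneg (hf0 ξ)]
    have : (1 : ℝ) / D ≠ 0 := by positivity
    tauto
  refine ⟨sSup (range f) ^ ((1 : ℝ) / D) * r, ?_⟩
  rw [Fcdf, setOf_mul_dist_le_eq_univ (fun ξ => Real.rpow_nonneg (hf0 ξ) _)
    (rpow_one_div_le_sSup_range hf0 hbdd) hr.le (hsupp_rpow ▸ hsub), measure_univ,
    ENNReal.toReal_one]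

theorem Fquantile_le_add [IsProbabilityMeasure (volume.withDensity fun ξ => ENNReal.ofReal (f ξ))]
    (hD : 0 < D) (hf0 : ∀ ξ, 0 ≤ f ξ) (hsupp : Bornology.IsBounded (Function.support f))
    (hbdd : BddAbove (range f)) {m : ℝ} (hm : m ∈ Ioo (0 : ℝ) 1)
    (x y : EuclideanSpace ℝ (Fin D)) :
    Fquantile f x m ≤ Fquantile f y m + sSup (range f) ^ ((1 : ℝ) / D) * dist x y := by
  have hbelow : BddBelow {t | m ≤ Fcdf f x t} :=
    ⟨0, fun t (ht : m ≤ Fcdf f x t) => not_lt.1 fun htneg => by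
      rw [Fcdf_of_neg hf0 x htneg] at ht; exact hm.1.not_ge ht⟩
  have hne : {t | m ≤ Fcdf f y t}.Nonempty := by
    obtain ⟨r, hr⟩ := exists_Fcdf_eq_one hD hf0 hsupp hbdd y
    exact ⟨r, show m ≤ Fcdf f y r from hr ▸ hm.2.le⟩
  exact csInf_setOf_le_le_add hbelow hne (Fcdf_le_Fcdf_add hf0 hbdd x y)

end Quantile

theorem quantile_lipschitz_general {D : ℕ} (hD : 0 < D)
    (f : EuclideanSpace ℝ (Fin D) → ℝ) (hf0 : ∀ ξ, 0 ≤ f ξ)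
    (hsupp : Bornology.IsBounded (Function.support f))
    (hbdd : BddAbove (Set.range f))
    (hprob : IsProbabilityMeasure (volume.withDensity fun ξ => ENNReal.ofReal (f ξ)))
    (m : ℝ) (hm : m ∈ Set.Ioo (0 : ℝ) 1) :
    ∀ x y : EuclideanSpace ℝ (Fin D),
      |Fquantile f x m - Fquantile f y m| ≤ (sSup (Set.range f)) ^ ((1 : ℝ) / D) * dist x y := by
  intro x y
  have hL : 0 ≤ sSup (range f) ^ ((1 : ℝ) / D) :=
    Real.rpow_nonneg ((hf0 x).trans (le_csSup hbdd ⟨x, rfl⟩)) _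
  have hlip := LipschitzWith.of_le_add_mul ⟨_, hL⟩ (Fquantile_le_add hD hf0 hsupp hbdd hm)
  rw [← Real.dist_eq]
  exact hlip.dist_le_mul x y

/-- For a bounded density `f` with bounded support, `x ↦ F_x^{-1}(m)` is Lipschitz with
constant `‖f‖_∞^{1/D}`. -/
theorem quantile_lipschitz {D : ℕ} (hD : 0 < D)
    (f : EuclideanSpace ℝ (Fin D) → ℝ) (hf : Measurable f) (hf0 : ∀ ξ, 0 ≤ f ξ)
    (hsupp : Bornology.IsBounded (Function.support f))
    (hbdd : BddAbove (Set.range f))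
    (hprob : IsProbabilityMeasure (volume.withDensity fun ξ => ENNReal.ofReal (f ξ)))
    (m : ℝ) (hm : m ∈ Set.Ioo (0 : ℝ) 1) :
    ∀ x y : EuclideanSpace ℝ (Fin D),
      |Fquantile f x m - Fquantile f y m| ≤ (sSup (Set.range f)) ^ ((1 : ℝ) / D) * dist x y :=
  quantile_lipschitz_general hD f hf0 hsupp hbdd hprob m hm
end
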